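/- arXiv:1308.4732 — 2 statements merged into one kernel-verified Lean document; each statement's English description precedes it below -/
import Mathlib

section
/- Double-max duality (dual to primal direction): If ζ̄ ∈ 𝓢ₐ⁻ is a critical point of Π^d and is a local maximizer of Π^d on 𝓢ₐ⁻, then x̄ = Gₐ(ζ̄)⁻¹f is a local maximizer of Π on ℝⁿ, and Π(x̄) = Π^d(ζ̄). -/
/-!
Write `Ξ(x, ζ) = ½ xᵀGₐ(ζ)x − fᵀx − V₁*(τ) − V₂*(σ)` for the total complementary function and
`ζ(x) = (softmax(β(½ xᵀQᵢx + dᵢ)), αᵢ(½ xᵀBᵢx + cᵢ))` for the canonical dual point of `x`.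
The Fenchel–Young equalities for log-sum-exp and for `σ ↦ σ²/(2α)` give `Π(x) = Ξ(x, ζ(x))`,
while for `Gₐ(ζ)` negative definite `Ξ(·, ζ)` is a concave quadratic whose maximum `Π^d(ζ)` is
attained at `Gₐ(ζ)⁻¹f`. The criticality equations say exactly that `ζ(x̄) = ζ̄`. As `ζ(·)` is
continuous and negative definiteness is an open condition, `ζ(x)` stays in `𝓢ₐ⁻` for `x` near
`x̄`, so there `Π(x) = Ξ(x, ζ(x)) ≤ Π^d(ζ(x)) ≤ Π^d(ζ̄) = Ξ(x̄, ζ̄) = Π(x̄)`.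
-/

open Matrix Filter Topology

theorem IsLocalMaxOn.isLocalMax_of_le_comp {X Z : Type*} [TopologicalSpace X]
    [TopologicalSpace Z] {P : X → ℝ} {D : Z → ℝ} {z : X → Z} {S : Set Z} {x₀ : X}
    (hD : IsLocalMaxOn D S (z x₀)) (hz : ContinuousAt z x₀) (hS : ∀ᶠ x in 𝓝 x₀, z x ∈ S)
    (hle : ∀ᶠ x in 𝓝 x₀, P x ≤ D (z x)) (heq : P x₀ = D (z x₀)) : IsLocalMax P x₀ := by
  have hD' : ∀ᶠ x in 𝓝 x₀, D (z x) ≤ D (z x₀) :=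
    hD.comp_tendsto (tendsto_nhdsWithin_iff.2 ⟨hz, hS⟩)
  filter_upwards [hle, hD'] with x hx hx'
  exact heq ▸ hx.trans hx'

section Softmax

variable {κ : Type*} [Fintype κ]

/-- Softmax over `κ` plus an extra coordinate fixed at `0`, whose weight is the remainder
`1 - ∑ i, softmaxWeights β e i`; `negEntropy` counts that coordinate too. -/
noncomputable def softmaxWeights (β : ℝ) (e : κ → ℝ) (i : κ) : ℝ :=
  Real.exp (β * e i) / (1 + ∑ j, Real.exp (β * e j))

noncomputable def negEntropy (τ : κ → ℝ) : ℝ :=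
  ∑ i, τ i * Real.log (τ i) + (1 - ∑ i, τ i) * Real.log (1 - ∑ i, τ i)

variable (β : ℝ) (e : κ → ℝ)

theorem one_add_sum_exp_pos : 0 < 1 + ∑ j, Real.exp (β * e j) := by positivity

theorem softmaxWeights_pos (i : κ) : 0 < softmaxWeights β e i :=
  div_pos (Real.exp_pos _) (one_add_sum_exp_pos β e)

theorem one_sub_sum_softmaxWeights :
    1 - ∑ i, softmaxWeights β e i = (1 + ∑ j, Real.exp (β * e j))⁻¹ := by
  have := (one_add_sum_exp_pos β e).ne'
  simp only [softmaxWeights, ← Finset.sum_div]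
  field_simp
  ring

theorem sum_softmaxWeights_lt_one : ∑ i, softmaxWeights β e i < 1 := by
  have := inv_pos.2 (one_add_sum_exp_pos β e)
  linarith [one_sub_sum_softmaxWeights β e]

theorem continuous_softmaxWeights {X : Type*} [TopologicalSpace X] {g : X → κ → ℝ}
    (hg : Continuous g) (i : κ) : Continuous fun x => softmaxWeights β (g x) i := by
  unfold softmaxWeights
  exact Continuous.div (by fun_prop) (by fun_prop) fun x => (one_add_sum_exp_pos β (g x)).ne'

variable {β e}

/-- Fenchel–Young equality for the log-sum-exp function. -/
theorem log_one_add_sum_exp_eq (hβ : β ≠ 0) :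
    (1 / β) * Real.log (1 + ∑ i, Real.exp (β * e i))
      = ∑ i, softmaxWeights β e i * e i - (1 / β) * negEntropy (softmaxWeights β e) := by
  set S := 1 + ∑ i, Real.exp (β * e i)
  have hS : 0 < S := one_add_sum_exp_pos β e
  have hlog : ∀ i, Real.log (softmaxWeights β e i) = β * e i - Real.log S := fun i => by
    rw [softmaxWeights, Real.log_div (Real.exp_ne_zero _) hS.ne', Real.log_exp]
  have hsum : ∑ i, softmaxWeights β e i = 1 - S⁻¹ := by
    rw [← one_sub_sum_softmaxWeights β e]; ring
  have hent : ∑ i, softmaxWeights β e i * Real.log (softmaxWeights β e i)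
      = β * ∑ i, softmaxWeights β e i * e i - (1 - S⁻¹) * Real.log S := by
    simp only [hlog, mul_sub, Finset.sum_sub_distrib, ← Finset.sum_mul, hsum, Finset.mul_sum,
      mul_left_comm _ β]
  have hrest : (1 - ∑ i, softmaxWeights β e i) * Real.log (1 - ∑ i, softmaxWeights β e i)
      = -(S⁻¹ * Real.log S) := by
    rw [one_sub_sum_softmaxWeights, Real.log_inv, mul_neg]
  rw [negEntropy, hent, hrest]
  field_simp
  ring

theorem softmaxWeights_log_ratio (hβ : β ≠ 0) {τ : κ → ℝ} (hτ : ∀ i, 0 < τ i)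
    (hτ_sum : ∑ i, τ i < 1) :
    softmaxWeights β (fun i => (1 / β) * Real.log (τ i / (1 - ∑ j, τ j))) = τ := by
  have hT : 0 < 1 - ∑ j, τ j := by linarith
  have hexp : ∀ i, Real.exp (β * ((1 / β) * Real.log (τ i / (1 - ∑ j, τ j))))
      = τ i / (1 - ∑ j, τ j) := fun i => by
    rw [← mul_assoc, mul_one_div_cancel hβ, one_mul, Real.exp_log (div_pos (hτ i) hT)]
  funext i
  simp only [softmaxWeights, hexp, ← Finset.sum_div]
  field_simp
  ring

end Softmax

section QuadraticForm

variable {ι : Type*} [Fintype ι]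

theorem isOpen_setOf_negDef :
    IsOpen {G : Matrix ι ι ℝ | ∀ v : ι → ℝ, v ≠ 0 → v ⬝ᵥ G *ᵥ v < 0} := by
  rw [isOpen_iff_mem_nhds]
  intro G₀ hG₀
  have hopen : IsOpen {q : Matrix ι ι ℝ × (ι → ℝ) | q.2 ⬝ᵥ q.1 *ᵥ q.2 < 0} :=
    isOpen_lt (by fun_prop) continuous_const
  -- By homogeneity it suffices to control the unit sphere, which is compact.
  obtain ⟨U, V, hU, -, hG₀U, hsphereV, hUV⟩ := generalized_tube_lemma isCompact_singleton
    (isCompact_sphere (0 : ι → ℝ) 1) hopen (by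
      rintro ⟨G, v⟩ ⟨rfl, hv⟩
      exact hG₀ v (ne_zero_of_mem_unit_sphere (⟨v, hv⟩ : Metric.sphere (0 : ι → ℝ) 1)))
  filter_upwards [hU.mem_nhds (hG₀U rfl)] with G hG v hv
  have hnorm : 0 < ‖v‖ := norm_pos_iff.2 hv
  have hw : ‖v‖⁻¹ • v ∈ Metric.sphere (0 : ι → ℝ) 1 := by
    rw [mem_sphere_zero_iff_norm, norm_smul, norm_inv, norm_norm, inv_mul_cancel₀ hnorm.ne']
  have hneg : (‖v‖⁻¹ • v) ⬝ᵥ G *ᵥ (‖v‖⁻¹ • v) < 0 := hUV (Set.mk_mem_prod hG (hsphereV hw))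
  rw [mulVec_smul, smul_dotProduct, dotProduct_smul, smul_eq_mul, smul_eq_mul, ← mul_assoc] at hneg
  exact neg_of_mul_neg_right hneg (by positivity)

theorem det_ne_zero_of_negDef [DecidableEq ι] {G : Matrix ι ι ℝ}
    (hG : ∀ v : ι → ℝ, v ≠ 0 → v ⬝ᵥ G *ᵥ v < 0) : G.det ≠ 0 := by
  intro h
  obtain ⟨v, hv, hGv⟩ := exists_mulVec_eq_zero_iff.2 h
  simpa [hGv] using hG v hv

theorem dotProduct_transpose_mul_mul_mulVec (P M : Matrix ι ι ℝ) (f : ι → ℝ) :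
    f ⬝ᵥ (Pᵀ * M * P) *ᵥ f = P *ᵥ f ⬝ᵥ M *ᵥ (P *ᵥ f) := by
  rw [← mulVec_mulVec, ← mulVec_mulVec, dotProduct_mulVec, ← mulVec_transpose, transpose_transpose]

theorem half_quadForm_sub_eq [DecidableEq ι] {G : Matrix ι ι ℝ} (hG : G.IsSymm)
    (hdet : G.det ≠ 0) (f x : ι → ℝ) :
    1 / 2 * (x ⬝ᵥ G *ᵥ x) - f ⬝ᵥ x
      = -(1 / 2) * (f ⬝ᵥ G⁻¹ *ᵥ f) + 1 / 2 * ((x - G⁻¹ *ᵥ f) ⬝ᵥ G *ᵥ (x - G⁻¹ *ᵥ f)) := by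
  set y := G⁻¹ *ᵥ f
  have hGy : G *ᵥ y = f := by
    rw [mulVec_mulVec, mul_nonsing_inv _ (isUnit_iff_ne_zero.2 hdet), one_mulVec]
  have hyx : y ⬝ᵥ G *ᵥ x = f ⬝ᵥ x := by
    rw [dotProduct_mulVec, ← mulVec_transpose, hG.eq, hGy, dotProduct_comm]
  rw [mulVec_sub, dotProduct_sub, sub_dotProduct, sub_dotProduct, hyx, hGy, dotProduct_comm y f,
    dotProduct_comm x f]
  ring

theorem half_quadForm_sub_le_of_negDef [DecidableEq ι] {G : Matrix ι ι ℝ} (hG : G.IsSymm)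
    (hneg : ∀ v : ι → ℝ, v ≠ 0 → v ⬝ᵥ G *ᵥ v < 0) (f x : ι → ℝ) :
    1 / 2 * (x ⬝ᵥ G *ᵥ x) - f ⬝ᵥ x ≤ -(1 / 2) * (f ⬝ᵥ G⁻¹ *ᵥ f) := by
  rw [half_quadForm_sub_eq hG (det_ne_zero_of_negDef hneg)]
  have : (x - G⁻¹ *ᵥ f) ⬝ᵥ G *ᵥ (x - G⁻¹ *ᵥ f) ≤ 0 := by
    rcases eq_or_ne (x - G⁻¹ *ᵥ f) 0 with h | h
    · simp [h]
    · exact (hneg _ h).le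
  linarith

end QuadraticForm

section CanonicalDuality

/-! `dualMatrix`, `entropyConj`, `quadraticConj`, `canonicalDual` are `Gₐ`, `V₁*`, `V₂*`, `Π^d`;
`totalComplementary` is `Ξ` and `canonicalDualMap` is `x ↦ ζ(x)`. -/

variable {ι κ μ : Type*} [Fintype κ]
  (A : Matrix ι ι ℝ) (Q : κ → Matrix ι ι ℝ) (B : μ → Matrix ι ι ℝ)
  (f : ι → ℝ) (d : κ → ℝ) (c : μ → ℝ) (β : ℝ) (α : μ → ℝ)

noncomputable def dualMatrix [Fintype μ] (ζ : κ ⊕ μ → ℝ) : Matrix ι ι ℝ :=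
  A + ∑ i, ζ (Sum.inl i) • Q i + ∑ i, ζ (Sum.inr i) • B i

noncomputable def primal [Fintype μ] [Fintype ι] (x : ι → ℝ) : ℝ :=
  1 / 2 * (x ⬝ᵥ A *ᵥ x) - f ⬝ᵥ x
    + 1 / β * Real.log (1 + ∑ i, Real.exp (β * (1 / 2 * (x ⬝ᵥ Q i *ᵥ x) + d i)))
    + ∑ i, α i / 2 * (1 / 2 * (x ⬝ᵥ B i *ᵥ x) + c i) ^ 2

noncomputable def entropyConj (τ : κ → ℝ) : ℝ :=
  1 / β * negEntropy τ - ∑ i, d i * τ i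

noncomputable def quadraticConj [Fintype μ] (σ : μ → ℝ) : ℝ :=
  ∑ i, σ i ^ 2 / (2 * α i) - ∑ i, c i * σ i

noncomputable def canonicalDual [Fintype μ] [Fintype ι] [DecidableEq ι] (ζ : κ ⊕ μ → ℝ) : ℝ :=
  -(1 / 2) * (f ⬝ᵥ (dualMatrix A Q B ζ)⁻¹ *ᵥ f)
    - entropyConj d β (fun i => ζ (Sum.inl i)) - quadraticConj c α (fun i => ζ (Sum.inr i))

noncomputable def totalComplementary [Fintype μ] [Fintype ι] (x : ι → ℝ) (ζ : κ ⊕ μ → ℝ) : ℝ :=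
  1 / 2 * (x ⬝ᵥ dualMatrix A Q B ζ *ᵥ x) - f ⬝ᵥ x
    - entropyConj d β (fun i => ζ (Sum.inl i)) - quadraticConj c α (fun i => ζ (Sum.inr i))

noncomputable def canonicalDualMap [Fintype ι] (x : ι → ℝ) : κ ⊕ μ → ℝ :=
  Sum.elim (softmaxWeights β fun i => 1 / 2 * (x ⬝ᵥ Q i *ᵥ x) + d i)
    fun i => α i * (1 / 2 * (x ⬝ᵥ B i *ᵥ x) + c i)

theorem dotProduct_dualMatrix_mulVec [Fintype μ] [Fintype ι] (ζ : κ ⊕ μ → ℝ) (x : ι → ℝ) :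
    x ⬝ᵥ dualMatrix A Q B ζ *ᵥ x = x ⬝ᵥ A *ᵥ x + ∑ i, ζ (Sum.inl i) * (x ⬝ᵥ Q i *ᵥ x)
      + ∑ i, ζ (Sum.inr i) * (x ⬝ᵥ B i *ᵥ x) := by
  simp only [dualMatrix, add_mulVec, sum_mulVec, smul_mulVec, dotProduct_add, dotProduct_sum,
    dotProduct_smul, smul_eq_mul]

theorem continuous_dualMatrix [Fintype μ] : Continuous (dualMatrix A Q B) := by
  unfold dualMatrix
  fun_prop

theorem continuous_canonicalDualMap [Fintype ι] : Continuous (canonicalDualMap Q B d c β α) := by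
  refine continuous_pi fun s => ?_
  cases s with
  | inl i =>
    exact continuous_softmaxWeights β (g := fun x i => 1 / 2 * (x ⬝ᵥ Q i *ᵥ x) + d i)
      (by fun_prop) i
  | inr i => simp only [canonicalDualMap, Sum.elim_inr]; fun_prop

theorem primal_eq_totalComplementary [Fintype μ] [Fintype ι] {β : ℝ} (hβ : β ≠ 0) {α : μ → ℝ}
    (hα : ∀ i, α i ≠ 0) (x : ι → ℝ) :
    primal A Q B f d c β α x
      = totalComplementary A Q B f d c β α x (canonicalDualMap Q B d c β α x) := by
  set τ := softmaxWeights β fun i => 1 / 2 * (x ⬝ᵥ Q i *ᵥ x) + d i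
  have hτ : ∑ i, τ i * (1 / 2 * (x ⬝ᵥ Q i *ᵥ x) + d i)
      = 1 / 2 * ∑ i, τ i * (x ⬝ᵥ Q i *ᵥ x) + ∑ i, d i * τ i := by
    rw [Finset.mul_sum, ← Finset.sum_add_distrib]
    exact Finset.sum_congr rfl fun i _ => by ring
  -- Fenchel–Young equality for `σ ↦ σ² / (2α)` at `σ = α q`.
  have hσ : ∑ i, α i / 2 * (1 / 2 * (x ⬝ᵥ B i *ᵥ x) + c i) ^ 2
      = 1 / 2 * ∑ i, α i * (1 / 2 * (x ⬝ᵥ B i *ᵥ x) + c i) * (x ⬝ᵥ B i *ᵥ x)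
        - quadraticConj c α fun i => α i * (1 / 2 * (x ⬝ᵥ B i *ᵥ x) + c i) := by
    rw [quadraticConj, Finset.mul_sum, ← Finset.sum_sub_distrib, ← Finset.sum_sub_distrib]
    refine Finset.sum_congr rfl fun i _ => ?_
    field_simp [hα i]
    ring
  rw [primal, totalComplementary, dotProduct_dualMatrix_mulVec, log_one_add_sum_exp_eq hβ, hσ]
  simp only [canonicalDualMap, Sum.elim_inl, Sum.elim_inr, entropyConj]
  linarith

theorem totalComplementary_le_canonicalDual [Fintype μ] [Fintype ι] [DecidableEq ι]
    {ζ : κ ⊕ μ → ℝ} (hsymm : (dualMatrix A Q B ζ).IsSymm)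
    (hneg : ∀ v : ι → ℝ, v ≠ 0 → v ⬝ᵥ dualMatrix A Q B ζ *ᵥ v < 0) (x : ι → ℝ) :
    totalComplementary A Q B f d c β α x ζ ≤ canonicalDual A Q B f d c β α ζ := by
  have := half_quadForm_sub_le_of_negDef hsymm hneg f x
  rw [totalComplementary, canonicalDual]
  linarith

theorem canonicalDual_eq_totalComplementary [Fintype μ] [Fintype ι] [DecidableEq ι]
    {ζ : κ ⊕ μ → ℝ} (hsymm : (dualMatrix A Q B ζ).IsSymm) (hdet : (dualMatrix A Q B ζ).det ≠ 0) :
    canonicalDual A Q B f d c β α ζ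
      = totalComplementary A Q B f d c β α ((dualMatrix A Q B ζ)⁻¹ *ᵥ f) ζ := by
  rw [canonicalDual, totalComplementary, half_quadForm_sub_eq hsymm hdet, sub_self,
    zero_dotProduct, mul_zero, add_zero]

variable {A Q B f d c β α}

theorem dualMatrix_isSymm [Fintype μ] (hA : A.IsSymm) (hQ : ∀ i, (Q i).IsSymm)
    (hB : ∀ i, (B i).IsSymm) (ζ : κ ⊕ μ → ℝ) : (dualMatrix A Q B ζ).IsSymm := by
  simp only [IsSymm, dualMatrix, transpose_add, transpose_sum, transpose_smul, hA.eq,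
    (hQ _).eq, (hB _).eq]

theorem canonicalDualMap_eq_of_critical [Fintype μ] [Fintype ι] [DecidableEq ι] (hβ : β ≠ 0)
    (hα : ∀ i, α i ≠ 0) {ζ : κ ⊕ μ → ℝ} (hsymm : (dualMatrix A Q B ζ).IsSymm)
    (hτ : ∀ i, 0 < ζ (Sum.inl i)) (hτ_sum : ∑ i, ζ (Sum.inl i) < 1)
    (hcrit₁ : ∀ i, 1 / 2 * (f ⬝ᵥ ((dualMatrix A Q B ζ)⁻¹ * Q i * (dualMatrix A Q B ζ)⁻¹) *ᵥ f)
      + d i = 1 / β * Real.log (ζ (Sum.inl i) / (1 - ∑ j, ζ (Sum.inl j))))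
    (hcrit₂ : ∀ i, 1 / 2 * (f ⬝ᵥ ((dualMatrix A Q B ζ)⁻¹ * B i * (dualMatrix A Q B ζ)⁻¹) *ᵥ f)
      + c i = ζ (Sum.inr i) / α i) :
    canonicalDualMap Q B d c β α ((dualMatrix A Q B ζ)⁻¹ *ᵥ f) = ζ := by
  set G := dualMatrix A Q B ζ
  have hinv : G⁻¹ᵀ = G⁻¹ := by rw [transpose_nonsing_inv, hsymm.eq]
  have hconj : ∀ M : Matrix ι ι ℝ, f ⬝ᵥ (G⁻¹ * M * G⁻¹) *ᵥ f = G⁻¹ *ᵥ f ⬝ᵥ M *ᵥ (G⁻¹ *ᵥ f) :=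
    fun M => by rw [← dotProduct_transpose_mul_mul_mulVec, hinv]
  funext s
  cases s with
  | inl i =>
    simp only [canonicalDualMap, Sum.elim_inl, ← hconj, hcrit₁]
    exact congrFun (softmaxWeights_log_ratio hβ hτ hτ_sum) i
  | inr i =>
    simp only [canonicalDualMap, Sum.elim_inr, ← hconj, hcrit₂]
    exact mul_div_cancel₀ _ (hα i)

end CanonicalDuality

theorem double_max_duality_dual_to_primal_general
    {n p r : ℕ}
    (A : Matrix (Fin n) (Fin n) ℝ) (hA : A.IsSymm)
    (Q : Fin p → Matrix (Fin n) (Fin n) ℝ) (hQ : ∀ i, (Q i).IsSymm)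
    (B : Fin r → Matrix (Fin n) (Fin n) ℝ) (hB : ∀ i, (B i).IsSymm)
    (f : Fin n → ℝ) (d : Fin p → ℝ) (c : Fin r → ℝ)
    (β : ℝ) (hβ : 0 < β) (α : Fin r → ℝ) (hα : ∀ i, 0 < α i)
    (Prim : (Fin n → ℝ) → ℝ)
    (hPrim : Prim = fun x => (1/2) * (x ⬝ᵥ A.mulVec x) - f ⬝ᵥ x
        + (1/β) * Real.log (1 + ∑ i, Real.exp (β * ((1/2) * (x ⬝ᵥ (Q i).mulVec x) + d i)))
        + ∑ i, (α i / 2) * ((1/2) * (x ⬝ᵥ (B i).mulVec x) + c i)^2)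
    (Ga : ((Fin p ⊕ Fin r) → ℝ) → Matrix (Fin n) (Fin n) ℝ)
    (hGa : Ga = fun ζ => A + ∑ i, ζ (Sum.inl i) • Q i + ∑ i, ζ (Sum.inr i) • B i)
    (Dual : ((Fin p ⊕ Fin r) → ℝ) → ℝ)
    (hDual : Dual = fun ζ => -(1/2) * (f ⬝ᵥ (Ga ζ)⁻¹.mulVec f)
        - ((1/β) * ((∑ i, ζ (Sum.inl i) * Real.log (ζ (Sum.inl i)))
            + (1 - ∑ i, ζ (Sum.inl i)) * Real.log (1 - ∑ i, ζ (Sum.inl i)))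
          - ∑ i, d i * ζ (Sum.inl i))
        - (∑ i, (ζ (Sum.inr i))^2 / (2 * α i) - ∑ i, c i * ζ (Sum.inr i)))
    (zb : (Fin p ⊕ Fin r) → ℝ)
    (hpos : ∀ i, 0 < zb (Sum.inl i)) (hsum : ∑ i, zb (Sum.inl i) < 1)
    (hdet : (Ga zb).det ≠ 0)
    (hcrit1 : ∀ i, (1/2) * (f ⬝ᵥ ((Ga zb)⁻¹ * Q i * (Ga zb)⁻¹).mulVec f) + d i
        = (1/β) * Real.log (zb (Sum.inl i) / (1 - ∑ j, zb (Sum.inl j))))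
    (hcrit2 : ∀ i, (1/2) * (f ⬝ᵥ ((Ga zb)⁻¹ * B i * (Ga zb)⁻¹).mulVec f) + c i
        = zb (Sum.inr i) / α i)
    (xb : Fin n → ℝ) (hxb : xb = (Ga zb)⁻¹.mulVec f)
    (hnegdef : ∀ x : Fin n → ℝ, x ≠ 0 → x ⬝ᵥ (Ga zb).mulVec x < 0)
    (hmax : IsLocalMaxOn Dual
      {ζ : (Fin p ⊕ Fin r) → ℝ | (∀ i, 0 < ζ (Sum.inl i)) ∧ (∑ i, ζ (Sum.inl i)) < 1 ∧
        (Ga ζ).det ≠ 0 ∧ ∀ x : Fin n → ℝ, x ≠ 0 → x ⬝ᵥ (Ga ζ).mulVec x < 0} zb) :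
    IsLocalMax Prim xb ∧ Prim xb = Dual zb := by
  obtain rfl : Ga = dualMatrix A Q B := hGa
  obtain rfl : Prim = primal A Q B f d c β α := hPrim
  obtain rfl : Dual = canonicalDual A Q B f d c β α := hDual
  have hα₀ : ∀ i, α i ≠ 0 := fun i => (hα i).ne'
  have hsymm := dualMatrix_isSymm hA hQ hB
  have hz : canonicalDualMap Q B d c β α xb = zb := by
    rw [hxb]
    exact canonicalDualMap_eq_of_critical hβ.ne' hα₀ (hsymm zb) hpos hsum hcrit1 hcrit2
  have hnegdef_near : ∀ᶠ x in 𝓝 xb, ∀ v : Fin n → ℝ,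
      v ≠ 0 → v ⬝ᵥ dualMatrix A Q B (canonicalDualMap Q B d c β α x) *ᵥ v < 0 := by
    refine ((continuous_dualMatrix A Q B).comp
      (continuous_canonicalDualMap Q B d c β α)).continuousAt.preimage_mem_nhds
      (isOpen_setOf_negDef.mem_nhds ?_)
    rw [Function.comp_apply, hz]
    exact hnegdef
  have heq : primal A Q B f d c β α xb = canonicalDual A Q B f d c β α zb := by
    rw [primal_eq_totalComplementary A Q B f d c hβ.ne' hα₀, hz, hxb,
      canonicalDual_eq_totalComplementary A Q B f d c β α (hsymm zb) hdet]
  have hle : ∀ᶠ x in 𝓝 xb, primal A Q B f d c β α x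
      ≤ canonicalDual A Q B f d c β α (canonicalDualMap Q B d c β α x) :=
    hnegdef_near.mono fun x hx =>
      (primal_eq_totalComplementary A Q B f d c hβ.ne' hα₀ x).trans_le
        (totalComplementary_le_canonicalDual A Q B f d c β α (hsymm _) hx x)
  rw [← hz] at hmax
  refine ⟨hmax.isLocalMax_of_le_comp (continuous_canonicalDualMap Q B d c β α).continuousAt
    (hnegdef_near.mono fun x hx => ⟨softmaxWeights_pos _ _, sum_softmaxWeights_lt_one _ _,
      det_ne_zero_of_negDef hx, hx⟩) hle (by rwa [hz]), heq⟩

theorem double_max_duality_dual_to_primal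
    {n p r : ℕ} (hn : 0 < n) (hp : 0 < p) (hr : 0 < r)
    (A : Matrix (Fin n) (Fin n) ℝ) (hA : A.IsSymm)
    (Q : Fin p → Matrix (Fin n) (Fin n) ℝ) (hQ : ∀ i, (Q i).IsSymm)
    (B : Fin r → Matrix (Fin n) (Fin n) ℝ) (hB : ∀ i, (B i).IsSymm)
    (f : Fin n → ℝ) (d : Fin p → ℝ) (c : Fin r → ℝ)
    (β : ℝ) (hβ : 0 < β) (α : Fin r → ℝ) (hα : ∀ i, 0 < α i)
    (Prim : (Fin n → ℝ) → ℝ)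
    (hPrim : Prim = fun x => (1/2) * (x ⬝ᵥ A.mulVec x) - f ⬝ᵥ x
        + (1/β) * Real.log (1 + ∑ i, Real.exp (β * ((1/2) * (x ⬝ᵥ (Q i).mulVec x) + d i)))
        + ∑ i, (α i / 2) * ((1/2) * (x ⬝ᵥ (B i).mulVec x) + c i)^2)
    (Ga : ((Fin p ⊕ Fin r) → ℝ) → Matrix (Fin n) (Fin n) ℝ)
    (hGa : Ga = fun ζ => A + ∑ i, ζ (Sum.inl i) • Q i + ∑ i, ζ (Sum.inr i) • B i)
    (Dual : ((Fin p ⊕ Fin r) → ℝ) → ℝ)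
    (hDual : Dual = fun ζ => -(1/2) * (f ⬝ᵥ (Ga ζ)⁻¹.mulVec f)
        - ((1/β) * ((∑ i, ζ (Sum.inl i) * Real.log (ζ (Sum.inl i)))
            + (1 - ∑ i, ζ (Sum.inl i)) * Real.log (1 - ∑ i, ζ (Sum.inl i)))
          - ∑ i, d i * ζ (Sum.inl i))
        - (∑ i, (ζ (Sum.inr i))^2 / (2 * α i) - ∑ i, c i * ζ (Sum.inr i)))
    (zb : (Fin p ⊕ Fin r) → ℝ)
    (hpos : ∀ i, 0 < zb (Sum.inl i)) (hsum : ∑ i, zb (Sum.inl i) < 1)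
    (hdet : (Ga zb).det ≠ 0)
    (hcrit1 : ∀ i, (1/2) * (f ⬝ᵥ ((Ga zb)⁻¹ * Q i * (Ga zb)⁻¹).mulVec f) + d i
        = (1/β) * Real.log (zb (Sum.inl i) / (1 - ∑ j, zb (Sum.inl j))))
    (hcrit2 : ∀ i, (1/2) * (f ⬝ᵥ ((Ga zb)⁻¹ * B i * (Ga zb)⁻¹).mulVec f) + c i
        = zb (Sum.inr i) / α i)
    (xb : Fin n → ℝ) (hxb : xb = (Ga zb)⁻¹.mulVec f)
    (hnegdef : ∀ x : Fin n → ℝ, x ≠ 0 → x ⬝ᵥ (Ga zb).mulVec x < 0)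
    (hmax : IsLocalMaxOn Dual
      {ζ : (Fin p ⊕ Fin r) → ℝ | (∀ i, 0 < ζ (Sum.inl i)) ∧ (∑ i, ζ (Sum.inl i)) < 1 ∧
        (Ga ζ).det ≠ 0 ∧ ∀ x : Fin n → ℝ, x ≠ 0 → x ⬝ᵥ (Ga ζ).mulVec x < 0} zb) :
    IsLocalMax Prim xb ∧ Prim xb = Dual zb :=
  double_max_duality_dual_to_primal_general A hA Q hQ B hB f d c β hβ α hα Prim hPrim Ga hGa Dual
    hDual zb hpos hsum hdet hcrit1 hcrit2 xb hxb hnegdef hmax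
end

section
/- Positive semidefinite case of the minimax problem: If λ₁ ≥ 0 (i.e. A is positive semidefinite), then there exists exactly one τ̄ ∈ (0, 1) satisfying the critical-point equation ½Σ_{i=1}^n f̂ᵢ²/(λᵢ+τ̄)² + d − (1/β)log(τ̄/(1−τ̄)) = 0, and x̄ = (A + τ̄I)⁻¹f is a global minimizer of Π₂ on ℝⁿ. -/
/-!
For `τ ∈ (0,1)` the dual equation says `τ = σ(β(½‖x̄(τ)‖² + d))`, where `σ` is the logistic
sigmoid, `x̄(τ) = (A + τI)⁻¹f` and `‖x̄(τ)‖² = Σᵢ f̂ᵢ²/(λᵢ+τ)²`. When `λ₁ ≥ 0` the right-hand side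
is antitone in `τ > 0`, so it has at most one fixed point, and the intermediate value theorem on
`[σ(βd), 1]` produces one. At this `τ` the tangent line of the convex function
`s ↦ β⁻¹ log(1 + exp(βs))` at `s̄ = ½‖x̄‖² + d` has slope `σ(βs̄) = τ`, so
`Π₂(x) ≥ ½xᵀ(A + τI)x − fᵀx + c` with equality at `x = x̄`; and `x̄` minimizes this convex
quadratic because `(A + τI)x̄ = f`.
-/

open Matrix Real Set

namespace Real

theorem sigmoid_div_one_sub_sigmoid (t : ℝ) : sigmoid t / (1 - sigmoid t) = exp t := by
  rw [← sigmoid_neg, sigmoid_def, sigmoid_def, neg_neg]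
  field_simp
  rw [add_mul, ← exp_add, neg_add_cancel, exp_zero, one_mul, add_comm]

theorem log_div_one_sub_eq_iff_eq_sigmoid {τ t : ℝ} (hτ : τ ∈ Ioo 0 1) :
    log (τ / (1 - τ)) = t ↔ τ = sigmoid t := by
  obtain ⟨s, rfl⟩ : τ ∈ range sigmoid := range_sigmoid ▸ hτ
  rw [sigmoid_div_one_sub_sigmoid, log_exp, sigmoid_inj]

theorem sigmoid_mul_sub_le_log_one_add_exp_sub (s t : ℝ) :
    sigmoid s * (t - s) ≤ log (1 + exp t) - log (1 + exp s) := by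
  have hp := sigmoid_pos s
  have hq := sigmoid_pos (-s)
  have hconv := convexOn_exp.2 (mem_univ (t - s)) (mem_univ 0) hp.le hq.le
    (by rw [sigmoid_neg]; ring)
  rw [← log_div (by positivity) (by positivity), le_log_iff_exp_le (by positivity)]
  calc exp (sigmoid s * (t - s))
      ≤ sigmoid s * exp (t - s) + sigmoid (-s) * exp 0 := by simpa using hconv
    _ = (1 + exp t) / (1 + exp s) := by
      rw [sigmoid_neg, sigmoid_def, exp_sub, exp_neg, exp_zero]
      field_simp
      ring

end Real

section Dual

variable {ι : Type*} [Fintype ι] {lam fhat : ι → ℝ} {β d τ : ℝ}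

noncomputable def dualNormSq (lam fhat : ι → ℝ) (τ : ℝ) : ℝ :=
  ∑ i, fhat i ^ 2 / (lam i + τ) ^ 2

/-- The derivative of the canonical dual function `Π₂^d`. -/
noncomputable def dualDeriv (lam fhat : ι → ℝ) (β d τ : ℝ) : ℝ :=
  (1/2) * dualNormSq lam fhat τ + d - (1/β) * log (τ / (1 - τ))

theorem dualNormSq_nonneg (lam fhat : ι → ℝ) (τ : ℝ) : 0 ≤ dualNormSq lam fhat τ :=
  Finset.sum_nonneg fun _ _ => by positivity

theorem antitoneOn_dualNormSq (hlam : 0 ≤ lam) (fhat : ι → ℝ) :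
    AntitoneOn (dualNormSq lam fhat) (Ioi 0) := fun s hs t _ hst =>
  Finset.sum_le_sum fun i _ => by
    have : 0 < lam i + s := add_pos_of_nonneg_of_pos (hlam i) hs
    gcongr

theorem continuousOn_dualNormSq (hlam : 0 ≤ lam) (fhat : ι → ℝ) :
    ContinuousOn (dualNormSq lam fhat) (Ioi 0) :=
  continuousOn_finsetSum _ fun i _ => continuousOn_const.div (by fun_prop) fun _ hτ =>
    (pow_pos (add_pos_of_nonneg_of_pos (hlam i) hτ) 2).ne'

theorem dualDeriv_eq_zero_iff (hβ : 0 < β) (hτ : τ ∈ Ioo 0 1) :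
    dualDeriv lam fhat β d τ = 0 ↔ τ = sigmoid (β * ((1/2) * dualNormSq lam fhat τ + d)) := by
  rw [← log_div_one_sub_eq_iff_eq_sigmoid hτ, dualDeriv, sub_eq_zero, eq_comm,
    one_div_mul_eq_div, div_eq_iff hβ.ne', mul_comm]

theorem existsUnique_dualDeriv_eq_zero (hlam : 0 ≤ lam) (hβ : 0 < β) (fhat : ι → ℝ) (d : ℝ) :
    ∃! τ, τ ∈ Ioo 0 1 ∧ dualDeriv lam fhat β d τ = 0 := by
  set h := fun τ => sigmoid (β * ((1/2) * dualNormSq lam fhat τ + d))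
  have hmono : StrictMonoOn (fun τ => τ - h τ) (Ioi 0) := fun s hs t ht hst => by
    have : h t ≤ h s := sigmoid_le <| by
      gcongr (β * ((1/2) * ?_ + d))
      exact antitoneOn_dualNormSq hlam fhat hs ht hst.le
    show s - h s < t - h t
    linarith
  have hcont : ContinuousOn (fun τ => τ - h τ) (Ioi 0) :=
    continuousOn_id.sub (continuous_sigmoid.comp_continuousOn
      (continuousOn_const.mul ((continuousOn_const.mul (continuousOn_dualNormSq hlam fhat)).add
        continuousOn_const)))
  have hstart : sigmoid (β * d) - h (sigmoid (β * d)) ≤ 0 := sub_nonpos.2 <| sigmoid_le <| by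
    nlinarith [dualNormSq_nonneg lam fhat (sigmoid (β * d))]
  have hend : 0 ≤ 1 - h 1 := sub_nonneg.2 (sigmoid_le_one _)
  obtain ⟨τ, hτIcc, hτ⟩ := intermediate_value_Icc (sigmoid_le_one _)
    (hcont.mono fun x hx => (sigmoid_pos _).trans_le hx.1) ⟨hstart, hend⟩
  have hfix : τ = h τ := sub_eq_zero.1 hτ
  have hτIoo : τ ∈ Ioo 0 1 := ⟨(sigmoid_pos _).trans_le hτIcc.1, hfix ▸ sigmoid_lt_one _⟩
  refine ⟨τ, ⟨hτIoo, (dualDeriv_eq_zero_iff hβ hτIoo).2 hfix⟩, fun σ ⟨hσ, hσ0⟩ =>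
    hmono.injOn hσ.1 hτIoo.1 ?_⟩
  exact (sub_eq_zero.2 ((dualDeriv_eq_zero_iff hβ hσ).1 hσ0)).trans hτ.symm

end Dual

theorem Matrix.PosSemidef.quadratic_le_of_mulVec_eq {ι : Type*} [Fintype ι] {B : Matrix ι ι ℝ}
    (hB : B.PosSemidef) {x₀ f : ι → ℝ} (hx₀ : B *ᵥ x₀ = f) (x : ι → ℝ) :
    (1/2) * (x₀ ⬝ᵥ B *ᵥ x₀) - f ⬝ᵥ x₀ ≤ (1/2) * (x ⬝ᵥ B *ᵥ x) - f ⬝ᵥ x := by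
  have hBt : Bᵀ = B := conjTranspose_eq_transpose_of_trivial B ▸ hB.isHermitian.eq
  have hsymm : x₀ ⬝ᵥ B *ᵥ x = f ⬝ᵥ x := by
    rw [← dotProduct_transpose_mulVec, hBt, hx₀, dotProduct_comm]
  have hnonneg := hB.dotProduct_mulVec_nonneg (x - x₀)
  rw [star_trivial, mulVec_sub, dotProduct_sub, sub_dotProduct, sub_dotProduct, hsymm, hx₀,
    dotProduct_comm x f] at hnonneg
  rw [hx₀]
  linarith [dotProduct_comm x₀ f]

section Primal

variable {ι : Type*} [Fintype ι] [DecidableEq ι]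

noncomputable def primalEnergy (A : Matrix ι ι ℝ) (f : ι → ℝ) (β d : ℝ) (x : ι → ℝ) : ℝ :=
  (1/2) * (x ⬝ᵥ A *ᵥ x) - f ⬝ᵥ x + (1/β) * log (1 + exp (β * ((1/2) * (x ⬝ᵥ x) + d)))

theorem dotProduct_add_smul_one_mulVec (A : Matrix ι ι ℝ) (τ : ℝ) (x : ι → ℝ) :
    x ⬝ᵥ (A + τ • 1) *ᵥ x = x ⬝ᵥ A *ᵥ x + τ * (x ⬝ᵥ x) := by
  rw [add_mulVec, smul_mulVec, one_mulVec, dotProduct_add, dotProduct_smul, smul_eq_mul]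

theorem primalEnergy_le_of_eq_sigmoid {A : Matrix ι ι ℝ} {f x₀ : ι → ℝ} {β d τ : ℝ} (hβ : 0 < β)
    (hB : (A + τ • 1).PosSemidef) (hx₀ : (A + τ • 1) *ᵥ x₀ = f)
    (hτ : τ = sigmoid (β * ((1/2) * (x₀ ⬝ᵥ x₀) + d))) (x : ι → ℝ) :
    primalEnergy A f β d x₀ ≤ primalEnergy A f β d x := by
  have hquad := hB.quadratic_le_of_mulVec_eq hx₀ x
  rw [dotProduct_add_smul_one_mulVec, dotProduct_add_smul_one_mulVec] at hquad
  have htangent := sigmoid_mul_sub_le_log_one_add_exp_sub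
    (β * ((1/2) * (x₀ ⬝ᵥ x₀) + d)) (β * ((1/2) * (x ⬝ᵥ x) + d))
  rw [← hτ] at htangent
  have hscaled : τ * ((1/2) * (x ⬝ᵥ x) - (1/2) * (x₀ ⬝ᵥ x₀)) ≤
      (1/β) * (log (1 + exp (β * ((1/2) * (x ⬝ᵥ x) + d))) -
        log (1 + exp (β * ((1/2) * (x₀ ⬝ᵥ x₀) + d)))) := by
    calc τ * ((1/2) * (x ⬝ᵥ x) - (1/2) * (x₀ ⬝ᵥ x₀))
        = (1/β) * (τ * (β * ((1/2) * (x ⬝ᵥ x) + d) - β * ((1/2) * (x₀ ⬝ᵥ x₀) + d))) := by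
          field_simp
          ring
      _ ≤ _ := mul_le_mul_of_nonneg_left htangent (one_div_pos.2 hβ).le
  unfold primalEnergy
  linarith

end Primal

section Spectral

variable {ι : Type*} [Fintype ι] [DecidableEq ι] {U : Matrix ι ι ℝ}

theorem conj_diagonal_add_smul_one (hU : U * Uᵀ = 1) (lam : ι → ℝ) (τ : ℝ) :
    U * diagonal lam * Uᵀ + τ • 1 = U * diagonal (fun i => lam i + τ) * Uᵀ := by
  rw [show diagonal (fun i => lam i + τ) = diagonal lam + τ • 1 by
      rw [smul_one_eq_diagonal, diagonal_add],
    Matrix.mul_add, Matrix.add_mul, Matrix.mul_smul, Matrix.smul_mul, Matrix.mul_one, hU]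

theorem posSemidef_conj_diagonal {μ : ι → ℝ} (hμ : 0 ≤ μ) :
    (U * diagonal μ * Uᵀ).PosSemidef :=
  conjTranspose_eq_transpose_of_trivial U ▸ (PosSemidef.diagonal hμ).mul_mul_conjTranspose_same U

theorem conj_diagonal_mul_conj_diagonal_inv (hU : U * Uᵀ = 1) {μ : ι → ℝ} (hμ : ∀ i, μ i ≠ 0) :
    U * diagonal μ * Uᵀ * (U * diagonal μ⁻¹ * Uᵀ) = 1 := by
  have hdiag : diagonal μ * diagonal μ⁻¹ = 1 := by
    rw [diagonal_mul_diagonal, ← diagonal_one]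
    exact congrArg diagonal (funext fun i => mul_inv_cancel₀ (hμ i))
  calc U * diagonal μ * Uᵀ * (U * diagonal μ⁻¹ * Uᵀ)
      = U * (diagonal μ * (Uᵀ * U) * diagonal μ⁻¹) * Uᵀ := by simp only [Matrix.mul_assoc]
    _ = 1 := by rw [mul_eq_one_comm.mp hU, Matrix.mul_one, hdiag, Matrix.mul_one, hU]

theorem dotProduct_self_mulVec_of_transpose_mul_self (hU : Uᵀ * U = 1) (v : ι → ℝ) :
    (U *ᵥ v) ⬝ᵥ (U *ᵥ v) = v ⬝ᵥ v := by
  rw [dotProduct_mulVec, vecMul_mulVec, hU, vecMul_one]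

theorem dotProduct_self_inv_conj_diagonal_mulVec (hU : U * Uᵀ = 1) {μ : ι → ℝ}
    (hμ : ∀ i, μ i ≠ 0) (f : ι → ℝ) :
    ((U * diagonal μ * Uᵀ)⁻¹ *ᵥ f) ⬝ᵥ ((U * diagonal μ * Uᵀ)⁻¹ *ᵥ f) =
      ∑ i, (Uᵀ *ᵥ f) i ^ 2 / μ i ^ 2 := by
  rw [inv_eq_right_inv (conj_diagonal_mul_conj_diagonal_inv hU hμ), ← mulVec_mulVec,
    ← mulVec_mulVec, dotProduct_self_mulVec_of_transpose_mul_self (mul_eq_one_comm.mp hU)]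
  refine Finset.sum_congr rfl fun i _ => ?_
  rw [mulVec_diagonal, Pi.inv_apply]
  ring

end Spectral

theorem minimax_psd_case_general
    {n : ℕ} (hn : 0 < n)
    (A : Matrix (Fin n) (Fin n) ℝ)
    (lam : Fin n → ℝ) (hsort : ∀ i j : Fin n, i ≤ j → lam i ≤ lam j)
    (U : Matrix (Fin n) (Fin n) ℝ) (hUorth : U * Uᵀ = 1)
    (hAeig : A = U * Matrix.diagonal lam * Uᵀ)
    (f : Fin n → ℝ) (fhat : Fin n → ℝ) (hfhat : fhat = Uᵀ.mulVec f)
    (lam1 : ℝ) (hlam1 : lam1 = lam ⟨0, hn⟩)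
    (β : ℝ) (hβ : 0 < β) (d : ℝ) (hlam : 0 ≤ lam1)
    (Pi2 : (Fin n → ℝ) → ℝ)
    (hPi2 : Pi2 = fun x : Fin n → ℝ => (1/2) * (x ⬝ᵥ A.mulVec x) - f ⬝ᵥ x
        + (1/β) * Real.log (1 + Real.exp (β * ((1/2) * (x ⬝ᵥ x) + d)))) :
    (∃! τ : ℝ, τ ∈ Set.Ioo (0 : ℝ) 1 ∧ (1/2) * (∑ i, fhat i ^ 2 / (lam i + τ) ^ 2) + d - (1/β) * Real.log (τ / (1 - τ)) = 0) ∧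
    (∀ τ ∈ Set.Ioo (0 : ℝ) 1, (1/2) * (∑ i, fhat i ^ 2 / (lam i + τ) ^ 2) + d - (1/β) * Real.log (τ / (1 - τ)) = 0 →
      ∀ x : Fin n → ℝ,
        Pi2 ((A + τ • (1 : Matrix (Fin n) (Fin n) ℝ))⁻¹.mulVec f) ≤ Pi2 x) := by
  subst hAeig hfhat hlam1 hPi2
  have hlam_nonneg : 0 ≤ lam := fun i => hlam.trans (hsort _ i (Nat.zero_le _))
  refine ⟨existsUnique_dualDeriv_eq_zero hlam_nonneg hβ _ d, fun τ hτ hcrit x => ?_⟩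
  have hμ : ∀ i, 0 < lam i + τ := fun i => add_pos_of_nonneg_of_pos (hlam_nonneg i) hτ.1
  have hB := conj_diagonal_add_smul_one hUorth lam τ
  have hunit := isUnit_det_of_right_inverse
    (conj_diagonal_mul_conj_diagonal_inv hUorth fun i => (hμ i).ne')
  refine primalEnergy_le_of_eq_sigmoid (τ := τ) hβ ?_ ?_ ?_ x
  · rw [hB]
    exact posSemidef_conj_diagonal fun i => (hμ i).le
  · rw [hB, mulVec_mulVec, mul_nonsing_inv _ hunit, one_mulVec]
  · rw [hB, dotProduct_self_inv_conj_diagonal_mulVec hUorth fun i => (hμ i).ne']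
    exact (dualDeriv_eq_zero_iff hβ hτ).1 hcrit

/-- **Positive semidefinite case of the minimax problem**: if `λ₁ ≥ 0` then the
dual critical point in `(0,1)` exists, is unique, and yields the global
minimizer of `Π₂`. -/
theorem minimax_psd_case
    {n : ℕ} (hn : 0 < n)
    (A : Matrix (Fin n) (Fin n) ℝ) (hA : A.IsSymm)
    (lam : Fin n → ℝ) (hsort : ∀ i j : Fin n, i ≤ j → lam i ≤ lam j)
    (U : Matrix (Fin n) (Fin n) ℝ) (hUorth : U * Uᵀ = 1)
    (hAeig : A = U * Matrix.diagonal lam * Uᵀ)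
    (f : Fin n → ℝ) (fhat : Fin n → ℝ) (hfhat : fhat = Uᵀ.mulVec f)
    (lam1 : ℝ) (hlam1 : lam1 = lam ⟨0, hn⟩)
    (β : ℝ) (hβ : 0 < β) (d : ℝ) (hlam : 0 ≤ lam1)
    (Pi2 : (Fin n → ℝ) → ℝ)
    (hPi2 : Pi2 = fun x : Fin n → ℝ => (1/2) * (x ⬝ᵥ A.mulVec x) - f ⬝ᵥ x
        + (1/β) * Real.log (1 + Real.exp (β * ((1/2) * (x ⬝ᵥ x) + d)))) :
    (∃! τ : ℝ, τ ∈ Set.Ioo (0 : ℝ) 1 ∧ (1/2) * (∑ i, fhat i ^ 2 / (lam i + τ) ^ 2) + d - (1/β) * Real.log (τ / (1 - τ)) = 0) ∧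
    (∀ τ ∈ Set.Ioo (0 : ℝ) 1, (1/2) * (∑ i, fhat i ^ 2 / (lam i + τ) ^ 2) + d - (1/β) * Real.log (τ / (1 - τ)) = 0 →
      ∀ x : Fin n → ℝ,
        Pi2 ((A + τ • (1 : Matrix (Fin n) (Fin n) ℝ))⁻¹.mulVec f) ≤ Pi2 x) :=
  minimax_psd_case_general hn A lam hsort U hUorth hAeig f fhat hfhat lam1 hlam1 β hβ d hlam Pi2
    hPi2
end
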